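/- arXiv:1801.00089 — 4 statements merged into one kernel-verified Lean document; each statement's English description precedes it below -/
import Mathlib

section
/- Let p be a prime number and let i be a positive integer. Then the polynomial X^p − X − s^(p·i+1), regarded as a polynomial in X with coefficients in the rational function field F_p(s) = RatFunc (ZMod p) (where s denotes the generator of the rational function field), is irreducible over F_p(s). -/
open Polynomial

section ArtinSchreierGeneral

variable {K : Type*} [Field K]

lemma artinSchreier_irreducible_of_no_root (p : ℕ) [hp : Fact p.Prime] [CharP K p]
    (a : K) (h : ∀ b : K, b ^ p - b ≠ a) :
    Irreducible (X ^ p - X - C a : K[X]) := by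
  set f : K[X] := X ^ p - X - C a with hf
  have hp1 : 1 < p := hp.out.one_lt
  have hfsplit : f = X ^ p - (X + C a) := by rw [hf]; ring
  have hdeg_sub : ((X : K[X]) + C a).natDegree < ((X : K[X]) ^ p).natDegree := by
    rw [natDegree_X_pow]
    calc ((X : K[X]) + C a).natDegree ≤ 1 := natDegree_add_le_of_degree_le
            natDegree_X.le (natDegree_C a ▸ Nat.zero_le 1)
      _ < p := hp1
  have hmonic : f.Monic := by
    rw [hfsplit]
    exact (monic_X_pow p).sub_of_left (degree_lt_degree hdeg_sub)
  have hdegf : f.natDegree = p := by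
    rw [hfsplit, natDegree_sub_eq_left_of_natDegree_lt hdeg_sub, natDegree_X_pow]
  set L := f.SplittingField with hL
  set ι : K →+* L := algebraMap K L with hι
  haveI : CharP L p := charP_of_injective_ringHom ι.injective p
  set φ : ZMod p →+* L := ι.comp (ZMod.castHom dvd_rfl K) with hφ
  have hfL : Splits (f.map ι) := SplittingField.splits f
  have hdeg0 : f.degree ≠ 0 := by
    rw [degree_eq_natDegree hmonic.ne_zero, hdegf]
    exact_mod_cast Nat.pos_iff_ne_zero.mp (Nat.zero_lt_of_lt hp1)
  obtain ⟨α, hα⟩ := hfL.exists_eval_eq_zero (by rwa [degree_map])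
  have hαroot : α ^ p - α - ι a = 0 := by
    simpa only [eval_map, hf, eval₂_sub, eval₂_X_pow, eval₂_X, eval₂_C] using hα
  -- every element x of L with x^p = x lies in the range of φ
  have hfix : ∀ x : L, x ^ p = x → ∃ j : ZMod p, φ j = x := by
    intro x hx
    have hs : Splits (X ^ p - X : (ZMod p)[X]) :=
      GaloisField.splits_zmod_X_pow_sub_X p
    have hm : (X ^ p - X : (ZMod p)[X]).Monic :=
      (monic_X_pow p).sub_of_left (by
        rw [degree_X, degree_X_pow]; exact_mod_cast hp1)
    have hprod : (X ^ p - X : (ZMod p)[X]) =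
        ((Finset.univ.val : Multiset (ZMod p)).map fun j : ZMod p => X - C j).prod := by
      have h2 := hs.eq_prod_roots_of_monic hm
      have h3 : (X ^ p - X : (ZMod p)[X]).roots = (Finset.univ.val : Multiset (ZMod p)) := by
        have := FiniteField.roots_X_pow_card_sub_X (ZMod p)
        simpa [ZMod.card p] using this
      rw [h2, h3]
    have heval : Polynomial.eval x ((X ^ p - X : (ZMod p)[X]).map φ) = 0 := by
      simp [hx]
    rw [hprod, Polynomial.map_multiset_prod, Multiset.map_map,
      Polynomial.eval_multiset_prod, Multiset.map_map] at heval
    have h0 : (0 : L) ∈ (Finset.univ.val : Multiset (ZMod p)).map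
        (Polynomial.eval x ∘ Polynomial.map φ ∘ fun j : ZMod p => X - C j) :=
      Multiset.prod_eq_zero_iff.mp heval
    obtain ⟨j, -, hj⟩ := Multiset.mem_map.mp h0
    refine ⟨j, ?_⟩
    simp only [Function.comp_apply, Polynomial.map_sub, map_X, map_C, eval_sub, eval_X,
      eval_C] at hj
    exact (sub_eq_zero.mp hj).symm
  -- main argument
  by_contra hirr
  have hfne : f ≠ 0 := hmonic.ne_zero
  have hfnu : ¬IsUnit f := fun hu => hdeg0 (isUnit_iff_degree_eq_zero.mp hu)
  rw [irreducible_iff] at hirr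
  push_neg at hirr
  obtain ⟨g0, h0, hfgh, hg0, hh0⟩ := hirr hfnu
  have hg0ne : g0 ≠ 0 := fun hz => hfne (by rw [hfgh, hz, zero_mul])
  have hh0ne : h0 ≠ 0 := fun hz => hfne (by rw [hfgh, hz, mul_zero])
  have hdg0 : 1 ≤ g0.natDegree := by
    rcases Nat.eq_zero_or_pos g0.natDegree with hz | hpos
    · exact absurd (isUnit_iff_degree_eq_zero.mpr
        (degree_eq_natDegree hg0ne ▸ by simp [hz])) hg0
    · exact hpos
  have hdh0 : 1 ≤ h0.natDegree := by
    rcases Nat.eq_zero_or_pos h0.natDegree with hz | hpos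
    · exact absurd (isUnit_iff_degree_eq_zero.mpr
        (degree_eq_natDegree hh0ne ▸ by simp [hz])) hh0
    · exact hpos
  have hsum : g0.natDegree + h0.natDegree = p := by
    rw [← hdegf, hfgh, natDegree_mul hg0ne hh0ne]
  -- make g monic
  set g : K[X] := g0 * C (g0.leadingCoeff)⁻¹ with hg
  have hgmonic : g.Monic := monic_mul_leadingCoeff_inv hg0ne
  have hlc : (C (g0.leadingCoeff)⁻¹ : K[X]) * C g0.leadingCoeff = 1 := by
    rw [← C_mul, inv_mul_cancel₀ (leadingCoeff_ne_zero.mpr hg0ne), C_1]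
  have hgdvd : g ∣ f := ⟨C g0.leadingCoeff * h0, by
    rw [hfgh]
    calc g0 * h0 = (C (g0.leadingCoeff)⁻¹ * C g0.leadingCoeff) * (g0 * h0) := by
          rw [hlc, one_mul]
      _ = g * (C g0.leadingCoeff * h0) := by rw [hg]; ring⟩
  set d := g.natDegree with hd
  have hdg : d = g0.natDegree := by
    rw [hd, hg, natDegree_mul hg0ne (by
      simpa using inv_ne_zero (leadingCoeff_ne_zero.mpr hg0ne)), natDegree_C, add_zero]
  have hd1 : 1 ≤ d := hdg ▸ hdg0
  have hdp : d < p := by omega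
  -- pass to L
  have hgLmonic : (g.map ι).Monic := hgmonic.map ι
  have hgsplits : Splits (g.map ι) := by
    exact hfL.of_dvd (map_ne_zero hfne) (Polynomial.map_dvd ι hgdvd)
  have hMcard : Multiset.card (g.map ι).roots = d := by
    rw [splits_iff_card_roots.mp hgsplits, natDegree_map]
  have hMsum : (g.map ι).roots.sum = -ι g.nextCoeff := by
    have h1 := hgsplits.nextCoeff_eq_neg_sum_roots_of_monic hgLmonic
    rw [show (g.map ι).nextCoeff = ι g.nextCoeff from nextCoeff_map ι.injective g] at h1
    rw [h1, neg_neg]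
  -- each root of g.map ι is of the form α + φ j
  have hroots : ∀ r ∈ (g.map ι).roots, ∃ j : ZMod p, r - α = φ j := by
    intro r hr
    have hrf : r ∈ (f.map ι).roots :=
      Multiset.mem_of_le (roots.le_of_dvd ((hmonic.map ι).ne_zero)
        (Polynomial.map_dvd ι hgdvd)) hr
    have hre : r ^ p - r - ι a = 0 := by
      have := (mem_roots ((hmonic.map ι).ne_zero)).mp hrf
      simpa only [hf, IsRoot, Polynomial.map_sub, Polynomial.map_pow, map_X, map_C, eval_sub,
        eval_pow, eval_X, eval_C] using this
    have hfixr : (r - α) ^ p = r - α := by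
      have hc : (r - α) ^ p = r ^ p - α ^ p := sub_pow_char r α
      have h1 : r ^ p = ι a + r := eq_add_of_sub_eq (sub_eq_zero.mp (by
        have : r ^ p - r - ι a = 0 := hre
        rw [sub_sub, sub_eq_zero] at this
        rw [this]; ring))
      have h2 : α ^ p = ι a + α := by
        have : α ^ p - α - ι a = 0 := hαroot
        rw [sub_sub, sub_eq_zero] at this
        rw [this]; ring
      rw [hc, h1, h2]; ring
    obtain ⟨j, hj⟩ := hfix _ hfixr
    exact ⟨j, hj.symm⟩
  -- sum decomposition
  have key : ∀ M : Multiset L, M.sum = (M.map (fun r => r - α)).sum +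
      (Multiset.card M) • α := by
    intro M
    induction M using Multiset.induction with
    | empty => simp
    | cons x s ih =>
      simp only [Multiset.sum_cons, Multiset.map_cons, Multiset.card_cons, succ_nsmul, ih]
      ring
  have hNsub : ((g.map ι).roots.map (fun r => r - α)).sum ∈ Set.range φ := by
    have hmem : ∀ x ∈ (g.map ι).roots.map (fun r => r - α), x ∈ (φ.range : Subring L) := by
      intro x hx
      obtain ⟨r, hr, hrx⟩ := Multiset.mem_map.mp hx
      obtain ⟨j, hj⟩ := hroots r hr
      exact ⟨j, by rw [← hrx, hj]⟩
    obtain ⟨c, hc⟩ := Subring.multiset_sum_mem (φ.range : Subring L) _ hmem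
    exact ⟨c, hc⟩
  obtain ⟨c, hc⟩ := hNsub
  have hdK : ((d : K)) ≠ 0 := by
    rw [Ne, CharP.cast_eq_zero_iff K p]
    exact fun hdvd => absurd (Nat.le_of_dvd (by omega) hdvd) (by omega)
  have hdL : (d : L) ≠ 0 := by
    rw [Ne, CharP.cast_eq_zero_iff L p]
    exact fun hdvd => absurd (Nat.le_of_dvd (by omega) hdvd) (by omega)
  have hdα : (d : L) * α = -ι g.nextCoeff - φ c := by
    have hk := key (g.map ι).roots
    rw [hMsum, hMcard, ← hc, nsmul_eq_mul] at hk
    rw [hk]; ring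
  set β : K := (d : K)⁻¹ * (-(g.nextCoeff) - ZMod.castHom dvd_rfl K c) with hβ
  have hιβ : ι β = α := by
    apply mul_left_cancel₀ hdL
    have hιd : ι (d : K) ≠ 0 := by rw [map_natCast]; exact hdL
    rw [hdα, hβ, map_mul, map_inv₀, map_sub, map_neg, ← map_natCast ι d, ← mul_assoc,
      mul_inv_cancel₀ hιd, one_mul]
    rfl
  refine h β ?_
  have hz : ι (β ^ p - β - a) = 0 := by
    rw [map_sub, map_sub, map_pow, hιβ]; exact hαroot
  have h0' : β ^ p - β - a = 0 := ι.injective (by simpa using hz)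
  rw [sub_sub, sub_eq_zero] at h0'
  rw [h0']; ring

end ArtinSchreierGeneral


section RatFuncDeg

variable {K : Type*} [Field K]

lemma ratFunc_intDegree_pow (x : RatFunc K) (hx : x ≠ 0) (n : ℕ) :
    (x ^ n).intDegree = n * x.intDegree := by
  induction n with
  | zero => simp [RatFunc.intDegree_one]
  | succ n ih =>
    rw [pow_succ, RatFunc.intDegree_mul (pow_ne_zero n hx) hx, ih]
    push_cast; ring

lemma ratFunc_intDegree_add_eq_left {x y : RatFunc K} (hx : x ≠ 0) (hy : y ≠ 0)
    (hxy : x + y ≠ 0) (h : y.intDegree < x.intDegree) :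
    (x + y).intDegree = x.intDegree := by
  refine le_antisymm ((RatFunc.intDegree_add_le hy hxy).trans (by simp [h.le]) ) ?_
  have hx' : x = (x + y) + (-y) := by ring
  have hle : x.intDegree ≤ max (x + y).intDegree (-y).intDegree := by
    calc x.intDegree = ((x + y) + (-y)).intDegree := by rw [← hx']
      _ ≤ max (x + y).intDegree (-y).intDegree :=
          RatFunc.intDegree_add_le (neg_ne_zero.mpr hy) (by rw [← hx']; exact hx)
  rcases max_cases (x + y).intDegree (-y).intDegree with ⟨hm, -⟩ | ⟨hm, -⟩
  · rwa [hm] at hle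
  · rw [hm, RatFunc.intDegree_neg] at hle
    exact absurd hle (not_le.mpr h)

end RatFuncDeg

lemma ratFunc_no_artinSchreier_root (p : ℕ) [hp : Fact p.Prime] (i : ℕ) (hi : 0 < i)
    (b : RatFunc (ZMod p)) : b ^ p - b ≠ RatFunc.X ^ (p * i + 1) := by
  intro hb
  have hp1 : 1 < p := hp.out.one_lt
  set n : ℕ := p * i + 1 with hn
  have hXne : (RatFunc.X : RatFunc (ZMod p)) ^ n ≠ 0 := pow_ne_zero _ RatFunc.X_ne_zero
  have hXdeg : ((RatFunc.X : RatFunc (ZMod p)) ^ n).intDegree = n := by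
    rw [ratFunc_intDegree_pow _ RatFunc.X_ne_zero, RatFunc.intDegree_X, mul_one]
  have hb0 : b ≠ 0 := by
    rintro rfl
    rw [zero_pow (by omega), sub_zero] at hb
    exact hXne hb.symm
  have hne : b ^ p + (-b) ≠ 0 := by rw [← sub_eq_add_neg, hb]; exact hXne
  have hbp : (b ^ p).intDegree = p * b.intDegree := ratFunc_intDegree_pow b hb0 p
  have hsub : (b ^ p + (-b)).intDegree = n := by rw [← sub_eq_add_neg, hb, hXdeg]
  rcases lt_or_ge 0 b.intDegree with hpos | hle
  · have hlt : (-b).intDegree < (b ^ p).intDegree := by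
      rw [RatFunc.intDegree_neg, hbp]
      nlinarith [hpos, hp1]
    have heq : (b ^ p + (-b)).intDegree = (b ^ p).intDegree :=
      ratFunc_intDegree_add_eq_left (pow_ne_zero p hb0) (neg_ne_zero.mpr hb0) hne hlt
    rw [hsub, hbp] at heq
    have hdvd : (p : ℤ) ∣ (n : ℤ) := heq ▸ Dvd.intro _ rfl
    have : (p : ℤ) ∣ 1 := by
      have h2 : (p : ℤ) ∣ (p : ℤ) * i := Dvd.intro _ rfl
      have : (n : ℤ) = (p : ℤ) * i + 1 := by rw [hn]; push_cast; ring
      rw [this] at hdvd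
      exact (Int.dvd_add_right h2).mp hdvd
    have := Int.le_of_dvd one_pos this
    omega
  · have hmax : (b ^ p + (-b)).intDegree ≤ max (b ^ p).intDegree (-b).intDegree :=
      RatFunc.intDegree_add_le (neg_ne_zero.mpr hb0) hne
    rw [hsub, hbp, RatFunc.intDegree_neg] at hmax
    have h1 : (p : ℤ) * b.intDegree ≤ 0 :=
      mul_nonpos_iff.mpr (Or.inl ⟨by positivity, hle⟩)
    have h2 : (0 : ℤ) < n := by positivity
    omega

/-- The Artin–Schreier polynomial `X^p - X - s^(p*i+1)` is irreducible over the
rational function field `𝔽_p(s)`. -/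
theorem artinSchreier_irreducible_over_ratFunc
    (p : ℕ) [Fact p.Prime] (i : ℕ) (hi : 0 < i) :
    Irreducible
      (X ^ p - X - C (RatFunc.X ^ (p * i + 1)) : Polynomial (RatFunc (ZMod p))) := by
  haveI : CharP (RatFunc (ZMod p)) p :=
    charP_of_injective_ringHom (algebraMap (ZMod p) (RatFunc (ZMod p))).injective p
  exact artinSchreier_irreducible_of_no_root p _ (ratFunc_no_artinSchreier_root p i hi)
end

section
/- Let p be a prime number and let f be a nonconstant polynomial in one variable s over F_p = ZMod p whose degree is not divisible by p. Then there is no rational function g in F_p(s) = RatFunc (ZMod p) satisfying g^p − g = f (where f is viewed in F_p(s) via the canonical inclusion of polynomials into rational functions). -/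
/-- If `f` is a nonconstant polynomial over `𝔽_p` whose degree is prime to `p`,
then `f` is not of the form `g^p - g` for a rational function `g ∈ 𝔽_p(s)`. -/
theorem not_artinSchreier_solvable_of_degree_not_dvd
    (p : ℕ) [Fact p.Prime] (f : Polynomial (ZMod p))
    (hf : f.natDegree ≠ 0) (hdeg : ¬ p ∣ f.natDegree) :
    ¬ ∃ g : RatFunc (ZMod p),
        g ^ p - g = algebraMap (Polynomial (ZMod p)) (RatFunc (ZMod p)) f := by
  rintro ⟨g, hg⟩
  have hp : Fact p.Prime := inferInstance
  have hp2 : 2 ≤ p := hp.out.two_le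
  -- g is integral over the polynomial ring
  have hint : IsIntegral (Polynomial (ZMod p)) g := by
    refine ⟨Polynomial.X ^ p - Polynomial.X - Polynomial.C f, ?_, ?_⟩
    · have h2 : ((Polynomial.X : Polynomial (Polynomial (ZMod p))) ^ p).Monic :=
        Polynomial.monic_X.pow p
      have h3 : ((Polynomial.X : Polynomial (Polynomial (ZMod p))) +
          Polynomial.C f).degree <
          ((Polynomial.X : Polynomial (Polynomial (ZMod p))) ^ p).degree := by
        rw [Polynomial.degree_X_pow]
        refine lt_of_le_of_lt (Polynomial.degree_add_le _ _) ?_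
        rw [Polynomial.degree_X]
        have hc : (Polynomial.C f : Polynomial (Polynomial (ZMod p))).degree ≤ 1 :=
          Polynomial.degree_C_le.trans (by norm_num)
        have hm : max (1 : WithBot ℕ) (Polynomial.C f :
            Polynomial (Polynomial (ZMod p))).degree ≤ 1 := max_le le_rfl hc
        refine lt_of_le_of_lt hm ?_
        exact_mod_cast Nat.lt_of_lt_of_le Nat.one_lt_two hp2
      rw [sub_sub]
      exact h2.sub_of_left h3
    · simp only [Polynomial.eval₂_sub, Polynomial.eval₂_pow, Polynomial.eval₂_X,
        Polynomial.eval₂_C]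
      linear_combination hg
  obtain ⟨h, rfl⟩ := IsIntegrallyClosed.isIntegral_iff.mp hint
  have hinj : Function.Injective
      (algebraMap (Polynomial (ZMod p)) (RatFunc (ZMod p))) :=
    IsFractionRing.injective _ _
  have key : h ^ p - h = f := by
    apply hinj
    rw [map_sub, map_pow]
    exact hg
  by_cases hh : h.natDegree = 0
  · -- h is constant, so f is constant: contradiction
    apply hf
    rw [← key]
    have : (h ^ p - h).natDegree ≤ 0 := by
      refine le_trans (Polynomial.natDegree_sub_le _ _) ?_
      simp [Polynomial.natDegree_pow, hh]
    omega
  · -- deg f = p * deg h is divisible by p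
    apply hdeg
    rw [← key]
    have hlt : h.natDegree < (h ^ p).natDegree := by
      rw [Polynomial.natDegree_pow]
      nlinarith [Nat.one_le_iff_ne_zero.mpr hh]
    rw [Polynomial.natDegree_sub_eq_left_of_natDegree_lt hlt,
      Polynomial.natDegree_pow]
    exact Dvd.intro _ rfl
end

section
/- Let p be a prime number and n a positive integer. Let L be the splitting field over F_p(s) = RatFunc (ZMod p) of the polynomial ∏_{i=1}^{n} (X^p − X − s^(p·i+1)) (a polynomial in X with coefficients in F_p(s), where s is the generator of the rational function field). Then the degree [L : F_p(s)] equals p^n. -/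
open Polynomial IntermediateField

set_option linter.unusedSectionVars false
set_option linter.unusedVariables false

section Prelim
variable (p : ℕ) [Fact p.Prime]

lemma AS.natDegree_aux {E : Type*} [Field E] (a : E) :
    (X ^ p - X - C a : E[X]).natDegree = p := by
  have hp2 : 2 ≤ p := (Fact.out : p.Prime).two_le
  have h1 : ((X : E[X]) + C a).natDegree < (X ^ p : E[X]).natDegree := by
    refine lt_of_le_of_lt (natDegree_add_le _ _) ?_
    rw [natDegree_X, natDegree_C, natDegree_X_pow]
    omega
  have h2 : (X ^ p - X - C a : E[X]) = X ^ p - (X + C a) := by ring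
  rw [h2, natDegree_sub_eq_left_of_natDegree_lt h1, natDegree_X_pow]

lemma AS.monic {E : Type*} [Field E] (a : E) :
    (X ^ p - X - C a : E[X]).Monic := by
  have hp2 : 2 ≤ p := (Fact.out : p.Prime).two_le
  have h2 : (X ^ p - X - C a : E[X]) = X ^ p - (X + C a) := by ring
  rw [h2]
  apply monic_X_pow_sub
  refine lt_of_le_of_lt (degree_add_le _ _) ?_
  rw [degree_X, max_lt_iff]
  constructor
  · exact_mod_cast by omega
  · exact lt_of_le_of_lt degree_C_le (by exact_mod_cast by omega)

/-- roots of X^p = X are exactly the prime field -/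
lemma AS.exists_zmod {E : Type*} [Field E] [CharP E p] {x : E} (hx : x ^ p = x) :
    ∃ c : ZMod p, ZMod.castHom dvd_rfl E c = x := by
  classical
  set φ : ZMod p →+* E := ZMod.castHom dvd_rfl E with hφdef
  have hφ : Function.Injective φ := φ.injective
  set P : E[X] := X ^ p - X with hPdef
  have hp2 : 2 ≤ p := (Fact.out : p.Prime).two_le
  have hPdeg : P.natDegree = p := by
    have h1 : ((X : E[X])).natDegree < (X ^ p : E[X]).natDegree := by
      rw [natDegree_X, natDegree_X_pow]; omega
    rw [hPdef, natDegree_sub_eq_left_of_natDegree_lt h1, natDegree_X_pow]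
  have hP0 : P ≠ 0 := fun h => by rw [h] at hPdeg; simp at hPdeg; omega
  have hroot : ∀ y : E, y ^ p = y → y ∈ P.roots := by
    intro y hy
    rw [mem_roots hP0]
    simp [hPdef, IsRoot, hy]
  have hSsub : (Finset.univ.image φ).val ≤ P.roots := by
    rw [Multiset.le_iff_subset (Finset.univ.image φ).nodup]
    intro y hy
    obtain ⟨c, _, rfl⟩ := Finset.mem_image.mp hy
    exact hroot _ (by rw [← map_pow, ZMod.pow_card])
  have hScard : (Finset.univ.image φ).card = p := by
    rw [Finset.card_image_of_injective _ hφ, Finset.card_univ, ZMod.card]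
  have hcard : P.roots.card ≤ p := hPdeg ▸ P.card_roots'
  have hSP : (Finset.univ.image φ).val = P.roots := by
    refine Multiset.eq_of_le_of_card_le hSsub ?_
    have : Multiset.card (Finset.univ.image φ).val = p := hScard
    omega
  have hx' : x ∈ (Finset.univ.image φ).val := hSP ▸ hroot x hx
  obtain ⟨c, _, hc⟩ := Finset.mem_image.mp hx'
  exact ⟨c, hc⟩

end Prelim

lemma AS.separable (p : ℕ) [Fact p.Prime] {E : Type*} [Field E] [CharP E p] (a : E) :
    (X ^ p - X - C a : E[X]).Separable := by
  have hder : (X ^ p - X - C a : E[X]).derivative = -1 := by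
    rw [derivative_sub, derivative_sub, derivative_X_pow, derivative_X, derivative_C]
    have : ((p : E[X]) : E[X]) = 0 := by
      exact_mod_cast CharP.cast_eq_zero E[X] p
    simp [this]
  refine ⟨0, -1, ?_⟩
  rw [hder]
  ring

lemma AS.splits (p : ℕ) [Fact p.Prime] {E : Type*} [Field E] [CharP E p] (x : E) :
    (X ^ p - X - C (x ^ p - x) : E[X]).Splits := by
  classical
  set φ : ZMod p →+* E := ZMod.castHom dvd_rfl E with hφdef
  have hφ : Function.Injective φ := φ.injective
  set P : E[X] := X ^ p - X - C (x ^ p - x) with hPdef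
  have hPdeg : P.natDegree = p := AS.natDegree_aux p _
  have hP0 : P ≠ 0 := (AS.monic p _).ne_zero
  have hroot : ∀ c : ZMod p, (x + φ c) ∈ P.roots := by
    intro c
    rw [mem_roots hP0]
    have hc : (φ c) ^ p = φ c := by rw [← map_pow, ZMod.pow_card]
    show eval (x + φ c) P = 0
    rw [hPdef]
    simp only [eval_sub, eval_pow, eval_X, eval_C]
    rw [add_pow_char, hc]
    ring
  have hinj2 : Function.Injective (fun c : ZMod p => x + φ c) := by
    intro c1 c2 h
    exact hφ (by simpa using h)
  have hSsub : (Finset.univ.image (fun c : ZMod p => x + φ c)).val ≤ P.roots := by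
    rw [Multiset.le_iff_subset (Finset.nodup _)]
    intro y hy
    obtain ⟨c, _, rfl⟩ := Finset.mem_image.mp hy
    exact hroot c
  have hScard : (Finset.univ.image (fun c : ZMod p => x + φ c)).card = p := by
    rw [Finset.card_image_of_injective _ hinj2, Finset.card_univ, ZMod.card]
  have hcard : Multiset.card P.roots ≤ p := hPdeg ▸ P.card_roots'
  have : Multiset.card P.roots = P.natDegree := by
    have h1 : (p : ℕ) ≤ Multiset.card P.roots := by
      have := Multiset.card_le_card hSsub
      rw [← hScard]; exact this
    omega
  exact (splits_iff_card_roots).mpr this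

theorem AS.exists_or_irreducible (p : ℕ) [Fact p.Prime] {F : Type*} [Field F] [CharP F p]
    (a : F) : (∃ u : F, u ^ p - u = a) ∨ Irreducible (X ^ p - X - C a : F[X]) := by
  by_cases h : ∃ u : F, u ^ p - u = a
  · exact Or.inl h
  right
  have hp2 : 2 ≤ p := (Fact.out : p.Prime).two_le
  set P : F[X] := X ^ p - X - C a with hPdef
  have hPm : P.Monic := AS.monic p a
  have hPdeg : P.natDegree = p := AS.natDegree_aux p a
  have hP0 : P ≠ 0 := hPm.ne_zero
  let E := P.SplittingField
  haveI : CharP E p := charP_of_injective_algebraMap (algebraMap F E).injective p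
  have hinj : Function.Injective (algebraMap F E) := (algebraMap F E).injective
  have hsplit : (P.map (algebraMap F E)).Splits := SplittingField.splits P
  obtain ⟨t, ht⟩ := hsplit.exists_eval_eq_zero
    (by rw [degree_map, degree_eq_natDegree hP0, hPdeg]; exact_mod_cast by omega)
  rw [eval_map] at ht
  have ht' : t ^ p - t = algebraMap F E a := by
    have : eval₂ (algebraMap F E) t P = t ^ p - t - algebraMap F E a := by
      simp [hPdef]
    rw [this] at ht; linear_combination ht
  have haev : (aeval t) P = 0 := by rw [aeval_def]; exact ht
  have hint : IsIntegral F t := ⟨P, hPm, haev⟩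
  set q := minpoly F t with hqdef
  have hq : q ∣ P := minpoly.dvd F t haev
  have hqm : q.Monic := minpoly.monic hint
  set d := q.natDegree with hddef
  have hd1 : 1 ≤ d := (minpoly.natDegree_pos hint)
  have hdp : d ≤ p := hPdeg ▸ natDegree_le_of_dvd hq hP0
  have hd : d = p := by
    by_contra hne
    have hdlt : d < p := lt_of_le_of_ne hdp hne
    have hqsplits : (q.map (algebraMap F E)).Splits :=
        hsplit.of_dvd ((Polynomial.map_ne_zero_iff hinj).mpr hP0) (Polynomial.map_dvd _ hq)
    set qE := q.map (algebraMap F E) with hqEdef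
    have hqE0 : qE ≠ 0 := (Polynomial.map_ne_zero_iff hinj).mpr hqm.ne_zero
    have hPE0 : P.map (algebraMap F E) ≠ 0 := (Polynomial.map_ne_zero_iff hinj).mpr hP0
    have hrle : qE.roots ≤ (P.map (algebraMap F E)).roots :=
      roots.le_of_dvd hPE0 (Polynomial.map_dvd _ hq)
    have hrootform : ∀ r ∈ qE.roots, ∃ c : ZMod p,
        r = t + algebraMap F E (ZMod.castHom dvd_rfl F c) := by
      intro r hr
      have hr' : r ∈ (P.map (algebraMap F E)).roots := Multiset.mem_of_le hrle hr
      have hre : r ^ p - r = algebraMap F E a := by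
        have := (mem_roots hPE0).mp hr'
        have h2 : eval r (P.map (algebraMap F E)) = r ^ p - r - algebraMap F E a := by
          simp [hPdef]
        rw [IsRoot, h2] at this; linear_combination this
      have hfix : (r - t) ^ p = r - t := by
        rw [sub_pow_char]
        linear_combination hre - ht'
      obtain ⟨c, hc⟩ := AS.exists_zmod p hfix
      refine ⟨c, ?_⟩
      have : (ZMod.castHom dvd_rfl E : ZMod p →+* E)
          = (algebraMap F E).comp (ZMod.castHom dvd_rfl F) := RingHom.ext_zmod _ _
      rw [this] at hc
      simp only [RingHom.comp_apply] at hc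
      linear_combination -hc
    -- sum of roots
    have hnext : qE.nextCoeff = -qE.roots.sum :=
      hqsplits.nextCoeff_eq_neg_sum_roots_of_monic (hqm.map _)
    have hcardroots : Multiset.card qE.roots = d := by
      rw [← hqsplits.natDegree_eq_card_roots, hqEdef, natDegree_map]
    set y := (qE.roots.map (fun r => r - t)).sum with hydef
    have hyp : y ^ p = y := by
      have hfr : frobenius E p y = y := by
        rw [hydef, map_multiset_sum]
        congr 1
        rw [Multiset.map_map]
        refine Multiset.map_congr rfl ?_
        intro r hr
        obtain ⟨c, hc⟩ := hrootform r hr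
        have : (r - t) ^ p = r - t := by
          have hcfix : (algebraMap F E (ZMod.castHom dvd_rfl F c)) ^ p
              = algebraMap F E (ZMod.castHom dvd_rfl F c) := by
            rw [← map_pow, ← map_pow, ZMod.pow_card]
          rw [hc]; simpa using hcfix
        simpa [frobenius_def] using this
      simpa [frobenius_def] using hfr
    obtain ⟨c0, hc0⟩ := AS.exists_zmod p hyp
    have hyF : y = algebraMap F E (ZMod.castHom dvd_rfl F c0) := by
      have : (ZMod.castHom dvd_rfl E : ZMod p →+* E)
          = (algebraMap F E).comp (ZMod.castHom dvd_rfl F) := RingHom.ext_zmod _ _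
      rw [this] at hc0
      simpa using hc0.symm
    have hsum : qE.roots.sum = y + d • t := by
      have : qE.roots.map (fun r => r) = qE.roots.map (fun r => (r - t) + t) := by
        refine Multiset.map_congr rfl (fun r _ => by ring)
      calc qE.roots.sum = (qE.roots.map (fun r => r)).sum := by rw [Multiset.map_id']
        _ = (qE.roots.map (fun r => (r - t) + t)).sum := by rw [← this]
        _ = (qE.roots.map (fun r => r - t)).sum + (qE.roots.map (fun _ => t)).sum := by
              rw [← Multiset.sum_map_add]
        _ = y + d • t := by
              rw [hydef, Multiset.map_const', Multiset.sum_replicate, hcardroots]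
    have hnextF : qE.nextCoeff = algebraMap F E q.nextCoeff := nextCoeff_map hinj q
    have hdne : (d : E) ≠ 0 := by
      rw [Ne, CharP.cast_eq_zero_iff E p d]
      intro hdvd
      exact absurd (Nat.le_of_dvd (by omega) hdvd) (by omega)
    have hdFne : (d : F) ≠ 0 := by
      rw [Ne, CharP.cast_eq_zero_iff F p d]
      intro hdvd
      exact absurd (Nat.le_of_dvd (by omega) hdvd) (by omega)
    set w : F := (d : F)⁻¹ * (-(q.nextCoeff) - ZMod.castHom dvd_rfl F c0) with hwdef
    have htF : t = algebraMap F E w := by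
      have h1 : (d : E) * t = -(algebraMap F E q.nextCoeff) - y := by
        have hthis := hnext
        rw [hnextF, hsum] at hthis
        have h2 : (d : E) * t = d • t := (nsmul_eq_mul d t).symm
        linear_combination h2 + hthis
      rw [hyF] at h1
      have h3 : (d : F) * w = -(q.nextCoeff) - ZMod.castHom dvd_rfl F c0 := by
        rw [hwdef, ← mul_assoc, mul_inv_cancel₀ hdFne, one_mul]
      apply mul_left_cancel₀ hdne
      rw [h1, ← map_natCast (algebraMap F E) d, ← map_mul, h3, map_sub, map_neg]
    refine h ⟨w, hinj ?_⟩
    rw [map_sub, map_pow, ← htF, ht']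
  -- conclude P = q
  obtain ⟨r, hr⟩ := hq
  have hr0 : r ≠ 0 := by rintro rfl; rw [mul_zero] at hr; exact hP0 hr
  have hrd : r.natDegree = 0 := by
    have := hr ▸ hPdeg
    rw [natDegree_mul hqm.ne_zero hr0] at this
    omega
  have hrlc : r.leadingCoeff = 1 := by
    have : P.leadingCoeff = q.leadingCoeff * r.leadingCoeff := by rw [hr, leadingCoeff_mul]
    rw [hPm.leadingCoeff, hqm.leadingCoeff, one_mul] at this
    exact this.symm
  have hrone : r = 1 := Polynomial.eq_one_of_monic_natDegree_zero hrlc hrd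
  rw [hr, hrone, mul_one]
  exact minpoly.irreducible hint

section Descend

variable (p : ℕ) [Fact p.Prime] {M L : Type*} [Field M] [Field L] [Algebra M L]
  [CharP M p] {b : M} {x : L}

lemma AS.aeval_root (hx : x ^ p - x = algebraMap M L b) :
    aeval x (X ^ p - X - C b : M[X]) = 0 := by
  simp only [map_sub, map_pow, aeval_X, aeval_C]
  rw [hx]; ring

lemma AS.minpoly_eq (hx : x ^ p - x = algebraMap M L b)
    (hirr : Irreducible (X ^ p - X - C b : M[X])) :
    minpoly M x = X ^ p - X - C b :=
  (minpoly.eq_of_irreducible_of_monic hirr (AS.aeval_root p hx) (AS.monic p b)).symm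

lemma AS.finrank_adjoin (hx : x ^ p - x = algebraMap M L b)
    (hirr : Irreducible (X ^ p - X - C b : M[X])) :
    Module.finrank M M⟮x⟯ = p := by
  have hint : IsIntegral M x := ⟨_, AS.monic p b, AS.aeval_root p hx⟩
  rw [adjoin.finrank hint, AS.minpoly_eq p hx hirr, AS.natDegree_aux]

lemma AS.descend (hx : x ^ p - x = algebraMap M L b)
    (hirr : Irreducible (X ^ p - X - C b : M[X]))
    {z : M⟮x⟯} {bz : M} (hz : algebraMap M M⟮x⟯ bz = z ^ p - z) :
    ∃ (c : ZMod p) (v : M),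
      bz = (v ^ p - v) + ZMod.castHom dvd_rfl M c * b := by
  classical
  haveI : CharP M⟮x⟯ p := charP_of_injective_algebraMap (algebraMap M M⟮x⟯).injective p
  haveI : CharP L p := charP_of_injective_algebraMap (algebraMap M L).injective p
  have hint : IsIntegral M x := ⟨_, AS.monic p b, AS.aeval_root p hx⟩
  set pb := adjoin.powerBasis hint with hpbdef
  have hgen : pb.gen = AdjoinSimple.gen M x := rfl
  have hgenL : algebraMap M⟮x⟯ L pb.gen = x := AdjoinSimple.algebraMap_gen M x
  have hinjNL : Function.Injective (algebraMap M⟮x⟯ L) := (algebraMap M⟮x⟯ L).injective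
  have hpgen : pb.gen ^ p - pb.gen = algebraMap M M⟮x⟯ b := by
    apply hinjNL
    rw [RingHom.map_sub, RingHom.map_pow, hgenL, ← IsScalarTower.algebraMap_apply]
    exact hx
  have hminp : minpoly M pb.gen = X ^ p - X - C b := by
    rw [hgen, minpoly_gen, AS.minpoly_eq p hx hirr]
  have haev1 : aeval (pb.gen + 1) (minpoly M pb.gen) = 0 := by
    rw [hminp]
    simp only [map_sub, map_pow, aeval_X, aeval_C]
    rw [add_pow_char, one_pow]
    linear_combination hpgen
  haveI : FiniteDimensional M M⟮x⟯ := pb.finite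
  set σ0 : M⟮x⟯ →ₐ[M] M⟮x⟯ := pb.lift (pb.gen + 1) haev1 with hσ0def
  set σ : M⟮x⟯ ≃ₐ[M] M⟮x⟯ := AlgEquiv.ofBijective σ0 σ0.bijective with hσdef
  have hσgen : σ pb.gen = pb.gen + 1 := pb.lift_gen _ haev1
  have hfinrank : Module.finrank M M⟮x⟯ = p := AS.finrank_adjoin p hx hirr
  -- N is a splitting field of the AS polynomial
  haveI hsf : IsSplittingField M M⟮x⟯ (X ^ p - X - C b) := by
    constructor
    · have hmap : (X ^ p - X - C b : M[X]).map (algebraMap M M⟮x⟯)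
          = X ^ p - X - C (pb.gen ^ p - pb.gen) := by
        rw [hpgen]
        simp [Polynomial.map_sub, Polynomial.map_pow]
      rw [hmap]
      exact AS.splits p pb.gen
    · have hmem : pb.gen ∈ (X ^ p - X - C b : M[X]).rootSet M⟮x⟯ := by
        rw [mem_rootSet]
        exact ⟨(AS.monic p b).ne_zero, by
          simp only [map_sub, map_pow, aeval_X, aeval_C]
          rw [hpgen]; ring⟩
      have h1 : (⊤ : Subalgebra M M⟮x⟯) ≤ Algebra.adjoin M ((X ^ p - X - C b : M[X]).rootSet M⟮x⟯) := by
        rw [← pb.adjoin_gen_eq_top]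
        apply Algebra.adjoin_mono
        simpa using hmem
      exact le_antisymm le_top h1
  haveI hgal : IsGalois M M⟮x⟯ :=
    IsGalois.of_separable_splitting_field (AS.separable p b)
  have hfixed : IntermediateField.fixedField (⊤ : Subgroup (M⟮x⟯ ≃ₐ[M] M⟮x⟯)) = ⊥ :=
    ((IsGalois.tfae (F := M) (E := M⟮x⟯)).out 0 1).mp hgal
  have hcard : Nat.card (M⟮x⟯ ≃ₐ[M] M⟮x⟯) = p := by
    rw [IsGalois.card_aut_eq_finrank, hfinrank]
  have hσne : σ ≠ 1 := by
    intro h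
    have : σ pb.gen = pb.gen := by rw [h]; rfl
    rw [hσgen] at this
    simpa using this
  have htop : Subgroup.zpowers σ = ⊤ := zpowers_eq_top_of_prime_card hcard hσne
  -- the Frobenius fixed element
  set φN : ZMod p →+* M⟮x⟯ := ZMod.castHom dvd_rfl M⟮x⟯ with hφNdef
  have hφcomp : φN = (algebraMap M M⟮x⟯).comp (ZMod.castHom dvd_rfl M) := RingHom.ext_zmod _ _
  have hσz : (σ z - z) ^ p = σ z - z := by
    have h1 : (σ z) ^ p - σ z = algebraMap M M⟮x⟯ bz := by
      rw [← map_pow, ← map_sub, ← hz]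
      exact σ.commutes bz
    rw [sub_pow_char]
    linear_combination h1 + hz
  obtain ⟨c, hc⟩ := AS.exists_zmod p hσz
  have hc' : σ z - z = φN c := hc.symm
  have hσφ : σ (φN c) = φN c := by
    rw [hφcomp]
    exact σ.commutes _
  set w' : M⟮x⟯ := z - φN c * pb.gen with hw'def
  have hσw' : σ w' = w' := by
    rw [hw'def, map_sub, map_mul, hσφ, hσgen]
    have : σ z = z + φN c := by rw [← hc']; ring
    rw [this]
    ring
  have hw'fix : w' ∈ IntermediateField.fixedField (⊤ : Subgroup (M⟮x⟯ ≃ₐ[M] M⟮x⟯)) := by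
    intro g
    have hσmem : σ ∈ MulAction.stabilizer (M⟮x⟯ ≃ₐ[M] M⟮x⟯) w' := by
      rw [MulAction.mem_stabilizer_iff]
      exact hσw'
    have hle : Subgroup.zpowers σ ≤ MulAction.stabilizer (M⟮x⟯ ≃ₐ[M] M⟮x⟯) w' :=
      Subgroup.zpowers_le.mpr hσmem
    have hg : (g : M⟮x⟯ ≃ₐ[M] M⟮x⟯) ∈ Subgroup.zpowers σ := by
      rw [htop]; exact Subgroup.mem_top _
    exact MulAction.mem_stabilizer_iff.mp (hle hg)
  rw [hfixed] at hw'fix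
  obtain ⟨v, hv⟩ := IntermediateField.mem_bot.mp hw'fix
  -- compute
  have hφc : (φN c) ^ p = φN c := by rw [← map_pow, ZMod.pow_card]
  have hkey : algebraMap M M⟮x⟯ (v ^ p - v)
      = algebraMap M M⟮x⟯ bz - φN c * algebraMap M M⟮x⟯ b := by
    rw [map_sub, map_pow, hv]
    rw [hw'def]
    rw [sub_pow_char, mul_pow, hφc, ← hpgen, hz]
    ring
  refine ⟨c, v, ?_⟩
  apply (algebraMap M M⟮x⟯).injective
  rw [map_add, map_mul, hkey, hφcomp]
  simp only [RingHom.comp_apply]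
  ring
end Descend

lemma AS.monic' (p : ℕ) [Fact p.Prime] {R : Type*} [CommRing R] [Nontrivial R] (a : R) :
    (X ^ p - X - C a : R[X]).Monic := by
  have hp2 : 2 ≤ p := (Fact.out : p.Prime).two_le
  have h2 : (X ^ p - X - C a : R[X]) = X ^ p - (X + C a) := by ring
  rw [h2]
  apply monic_X_pow_sub
  refine lt_of_le_of_lt (degree_add_le _ _) ?_
  rw [degree_X, max_lt_iff]
  exact ⟨by exact_mod_cast by omega, lt_of_le_of_lt degree_C_le (by exact_mod_cast by omega)⟩

lemma AS.poly_indep (p n : ℕ) [Fact p.Prime] (c : ℕ → ZMod p) (U : (ZMod p)[X])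
    (hUG : U ^ p - U = ∑ i ∈ Finset.Icc 1 n, C (c i) * X ^ (p * i + 1)) :
    ∀ i ∈ Finset.Icc 1 n, c i = 0 := by
  have hp2 : 2 ≤ p := (Fact.out : p.Prime).two_le
  by_contra hcon
  push_neg at hcon
  obtain ⟨j, hj, hcj⟩ := hcon
  set G : (ZMod p)[X] := ∑ i ∈ Finset.Icc 1 n, C (c i) * X ^ (p * i + 1) with hGdef
  have hcoeff : ∀ m : ℕ, G.coeff m = ∑ i ∈ Finset.Icc 1 n,
      (if m = p * i + 1 then c i else 0) := by
    intro m
    rw [hGdef, finset_sum_coeff]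
    refine Finset.sum_congr rfl (fun i _ => ?_)
    rw [coeff_C_mul, coeff_X_pow, mul_ite, mul_one, mul_zero]
  have hGj : G.coeff (p * j + 1) = c j := by
    rw [hcoeff]
    rw [Finset.sum_eq_single j]
    · simp
    · intro i hi hne
      have hfalse : p * j + 1 ≠ p * i + 1 := by
        intro hpe
        have : p * j = p * i := by omega
        exact hne ((Nat.eq_of_mul_eq_mul_left (by omega) this).symm)
      rw [if_neg hfalse]
    · intro h; exact absurd hj h
  have hG0 : G ≠ 0 := by
    intro h
    rw [h, Polynomial.coeff_zero] at hGj
    exact hcj hGj.symm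
  have hmform : ∃ i ∈ Finset.Icc 1 n, G.natDegree = p * i + 1 := by
    by_contra hno
    push_neg at hno
    have hz : G.coeff G.natDegree = 0 := by
      rw [hcoeff]
      exact Finset.sum_eq_zero (fun i hi => by simp [hno i hi])
    exact (Polynomial.leadingCoeff_ne_zero.mpr hG0) hz
  obtain ⟨i0, hi0, hm⟩ := hmform
  have hUG' : (U ^ p - U).natDegree = p * i0 + 1 := by rw [hUG, hm]
  by_cases hdU : U.natDegree = 0
  · have hUC : U = C (U.coeff 0) := Polynomial.eq_C_of_natDegree_eq_zero hdU
    have hz : U ^ p - U = 0 := by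
      rw [hUC, ← C_pow, ← C_sub, ZMod.pow_card, sub_self, map_zero]
    rw [hz] at hUG
    exact hG0 (hGdef ▸ hUG.symm)
  · have hdU1 : 1 ≤ U.natDegree := Nat.one_le_iff_ne_zero.mpr hdU
    have hlt : U.natDegree < (U ^ p).natDegree := by
      rw [natDegree_pow]
      calc U.natDegree = 1 * U.natDegree := (one_mul _).symm
        _ < p * U.natDegree := by
            apply Nat.mul_lt_mul_of_lt_of_le (by omega) le_rfl (by omega)
    have heq : (U ^ p - U).natDegree = p * U.natDegree := by
      rw [natDegree_sub_eq_left_of_natDegree_lt hlt, natDegree_pow]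
    rw [heq] at hUG'
    have hdvd : p ∣ p * i0 + 1 := hUG' ▸ dvd_mul_right p U.natDegree
    have h1 : p ∣ 1 := (Nat.dvd_add_right (dvd_mul_right p i0)).mp hdvd
    exact absurd (Nat.le_of_dvd one_pos h1) (by omega)

lemma AS.ratfunc_indep (p n : ℕ) [Fact p.Prime] (c : ℕ → ZMod p) (u : RatFunc (ZMod p))
    (h : (∑ i ∈ Finset.Icc 1 n,
        RatFunc.C (c i) * RatFunc.X ^ (p * i + 1))
      = u ^ p - u) :
    ∀ i ∈ Finset.Icc 1 n, c i = 0 := by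
  set A := algebraMap (ZMod p)[X] (RatFunc (ZMod p)) with hAdef
  set G : (ZMod p)[X] := ∑ i ∈ Finset.Icc 1 n, C (c i) * X ^ (p * i + 1) with hGdef
  have hAG : A G = ∑ i ∈ Finset.Icc 1 n,
      RatFunc.C (c i) * RatFunc.X ^ (p * i + 1) := by
    rw [hGdef, map_sum]
    refine Finset.sum_congr rfl (fun i _ => ?_)
    rw [map_mul, map_pow, RatFunc.algebraMap_X, RatFunc.algebraMap_C]
  have hint : IsIntegral (ZMod p)[X] u := by
    refine ⟨X ^ p - X - C G, AS.monic' p G, ?_⟩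
    simp only [eval₂_sub, eval₂_pow, eval₂_X, eval₂_C]
    rw [← hAdef, hAG, h]
    ring
  obtain ⟨U, hU⟩ := IsIntegrallyClosed.isIntegral_iff.mp hint
  have hUG : U ^ p - U = G := by
    apply IsFractionRing.injective (ZMod p)[X] (RatFunc (ZMod p))
    rw [map_sub, map_pow]
    rw [show algebraMap (ZMod p)[X] (RatFunc (ZMod p)) U = u from hU]
    rw [← hAdef, hAG, ← h]
  exact AS.poly_indep p n c U (by rw [hUG])

set_option synthInstance.maxHeartbeats 1000000 in
set_option maxHeartbeats 2000000 in
lemma AS.main (p : ℕ) [Fact p.Prime] {F L : Type*} [Field F] [Field L] [Algebra F L]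
    [CharP F p] (a : ℕ → F) (t : ℕ → L) : ∀ n : ℕ,
    (∀ i ∈ Finset.Icc 1 n, (t i) ^ p - t i = algebraMap F L (a i)) →
    (∀ (c : ℕ → ZMod p) (u : F),
        (∑ i ∈ Finset.Icc 1 n, ZMod.castHom dvd_rfl F (c i) * a i) = u ^ p - u →
        ∀ i ∈ Finset.Icc 1 n, c i = 0) →
    Module.finrank F (IntermediateField.adjoin F (t '' Set.Icc 1 n)) = p ^ n ∧
    (∀ z : IntermediateField.adjoin F (t '' Set.Icc 1 n), ∀ bz : F,
        algebraMap F L bz = (z : L) ^ p - (z : L) →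
        ∃ (c : ℕ → ZMod p) (u : F),
          bz = (u ^ p - u) + ∑ i ∈ Finset.Icc 1 n, ZMod.castHom dvd_rfl F (c i) * a i) := by
  intro n
  induction n with
  | zero =>
    intro ht hind
    have hset : t '' Set.Icc 1 0 = (∅ : Set L) := by
      have h0 : Set.Icc (1:ℕ) 0 = ∅ := by ext i; simp
      rw [h0, Set.image_empty]
    constructor
    · rw [hset, IntermediateField.adjoin_empty, pow_zero, IntermediateField.finrank_bot]
    · rintro ⟨y, hy⟩ bz hbz
      rw [hset, IntermediateField.adjoin_empty] at hy
      obtain ⟨v, hv⟩ := IntermediateField.mem_bot.mp hy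
      refine ⟨0, v, ?_⟩
      have h2 : algebraMap F L bz = algebraMap F L (v ^ p - v) := by
        rw [map_sub, map_pow, hv]
        exact hbz
      have hbv := (algebraMap F L).injective h2
      simp [hbv]
  | succ n IH =>
    intro ht hind
    have hsub : ∀ i ∈ Finset.Icc 1 n, i ∈ Finset.Icc 1 (n+1) := by
      intro i hi; simp only [Finset.mem_Icc] at *; omega
    have hIcc : Finset.Icc 1 (n+1) = insert (n+1) (Finset.Icc 1 n) := by
      ext i; simp only [Finset.mem_Icc, Finset.mem_insert]; omega
    have hnotmem : (n+1) ∉ Finset.Icc 1 n := by simp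
    have hsum : ∀ (g : ℕ → F), ∑ i ∈ Finset.Icc 1 (n+1), g i
        = g (n+1) + ∑ i ∈ Finset.Icc 1 n, g i := by
      intro g; rw [hIcc, Finset.sum_insert hnotmem]
    have ht' : ∀ i ∈ Finset.Icc 1 n, (t i) ^ p - t i = algebraMap F L (a i) :=
      fun i hi => ht i (hsub i hi)
    have hind' : ∀ (c : ℕ → ZMod p) (u : F),
        (∑ i ∈ Finset.Icc 1 n, ZMod.castHom dvd_rfl F (c i) * a i) = u ^ p - u →
        ∀ i ∈ Finset.Icc 1 n, c i = 0 := by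
      intro c u hc i hi
      have hs : (∑ i ∈ Finset.Icc 1 (n+1),
          ZMod.castHom dvd_rfl F ((fun j => if j = n+1 then 0 else c j) i) * a i)
          = u ^ p - u := by
        rw [hsum]
        have h2 : ∀ j ∈ Finset.Icc 1 n,
            ZMod.castHom dvd_rfl F (if j = n+1 then 0 else c j) * a j
            = ZMod.castHom dvd_rfl F (c j) * a j := by
          intro j hj
          have hjne : j ≠ n+1 := by simp only [Finset.mem_Icc] at hj; omega
          rw [if_neg hjne]
        rw [Finset.sum_congr rfl h2]
        have h1 : (if n+1 = n+1 then (0 : ZMod p) else c (n+1)) = 0 := if_pos rfl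
        beta_reduce
        rw [h1]
        simpa using hc
      have h3 := hind _ u hs i (hsub i hi)
      have hine : i ≠ n+1 := by simp only [Finset.mem_Icc] at hi; omega
      simpa [hine] using h3
    obtain ⟨hMrank, hInv⟩ := IH ht' hind'
    haveI : CharP (IntermediateField.adjoin F (t '' Set.Icc 1 n)) p :=
      charP_of_injective_algebraMap
        (algebraMap F (IntermediateField.adjoin F (t '' Set.Icc 1 n))).injective p
    have hmem1 : (n+1) ∈ Finset.Icc 1 (n+1) := by simp
    have hx : t (n+1) ^ p - t (n+1) = algebraMap F L (a (n+1)) := ht (n+1) hmem1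
    have hxM : t (n+1) ^ p - t (n+1)
        = algebraMap (IntermediateField.adjoin F (t '' Set.Icc 1 n)) L
          (algebraMap F (IntermediateField.adjoin F (t '' Set.Icc 1 n)) (a (n+1))) := by
      rw [← IsScalarTower.algebraMap_apply]; exact hx
    have hirr : Irreducible (X ^ p - X
        - C (algebraMap F (IntermediateField.adjoin F (t '' Set.Icc 1 n)) (a (n+1)))) := by
      rcases AS.exists_or_irreducible p
        (algebraMap F (IntermediateField.adjoin F (t '' Set.Icc 1 n)) (a (n+1))) with ⟨v, hv⟩ | h
      · exfalso
        have hvL : algebraMap F L (a (n+1)) = (v:L)^p - (v:L) := by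
          rw [IsScalarTower.algebraMap_apply F (IntermediateField.adjoin F (t '' Set.Icc 1 n)) L,
            ← hv, RingHom.map_sub, RingHom.map_pow]
          rfl
        obtain ⟨c, u, hcu⟩ := hInv v (a (n+1)) hvL
        have hs : (∑ i ∈ Finset.Icc 1 (n+1),
            ZMod.castHom dvd_rfl F ((fun j => if j = n+1 then 1 else -(c j)) i) * a i)
            = u ^ p - u := by
          rw [hsum]
          have h2 : ∀ j ∈ Finset.Icc 1 n,
              ZMod.castHom dvd_rfl F (if j = n+1 then 1 else -(c j)) * a j
              = -(ZMod.castHom dvd_rfl F (c j) * a j) := by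
            intro j hj
            have hjne : j ≠ n+1 := by simp only [Finset.mem_Icc] at hj; omega
            rw [if_neg hjne, map_neg, neg_mul]
          rw [Finset.sum_congr rfl h2]
          have h1 : (if n+1 = n+1 then (1 : ZMod p) else -(c (n+1))) = 1 := if_pos rfl
          beta_reduce
          rw [h1, map_one, one_mul, Finset.sum_neg_distrib]
          linear_combination hcu
        have h1 := hind _ u hs (n+1) hmem1
        simp at h1
      · exact h
    have hrankStep : Module.finrank (IntermediateField.adjoin F (t '' Set.Icc 1 n))
        (IntermediateField.adjoin F (t '' Set.Icc 1 n))⟮t (n+1)⟯ = p :=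
      AS.finrank_adjoin p hxM hirr
    have himage : t '' Set.Icc 1 (n+1) = (t '' Set.Icc 1 n) ∪ {t (n+1)} := by
      ext y
      simp only [Set.mem_image, Set.mem_Icc, Set.mem_union, Set.mem_singleton_iff]
      constructor
      · rintro ⟨i, ⟨h1, h2⟩, rfl⟩
        rcases Nat.lt_or_ge i (n+1) with hlt | hge
        · exact Or.inl ⟨i, ⟨h1, by omega⟩, rfl⟩
        · have : i = n+1 := by omega
          exact Or.inr (by rw [this])
      · rintro (⟨i, ⟨h1, h2⟩, rfl⟩ | rfl)
        · exact ⟨i, ⟨h1, by omega⟩, rfl⟩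
        · exact ⟨n+1, ⟨by omega, le_rfl⟩, rfl⟩
    have hadj : IntermediateField.adjoin F (t '' Set.Icc 1 (n+1))
        = ((IntermediateField.adjoin F (t '' Set.Icc 1 n))⟮t (n+1)⟯).restrictScalars F := by
      rw [himage, ← IntermediateField.adjoin_adjoin_left]
    have hfinrank : Module.finrank F (IntermediateField.adjoin F (t '' Set.Icc 1 (n+1)))
        = p ^ (n+1) := by
      rw [hadj]
      have h2 : Module.finrank F
          (((IntermediateField.adjoin F (t '' Set.Icc 1 n))⟮t (n+1)⟯).restrictScalars F)
          = Module.finrank F (IntermediateField.adjoin F (t '' Set.Icc 1 n))⟮t (n+1)⟯ := rfl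
      rw [h2, ← Module.finrank_mul_finrank F (IntermediateField.adjoin F (t '' Set.Icc 1 n))
        (IntermediateField.adjoin F (t '' Set.Icc 1 n))⟮t (n+1)⟯, hMrank, hrankStep, pow_succ]
    refine ⟨hfinrank, ?_⟩
    rintro ⟨y, hy⟩ bz hbz
    rw [hadj] at hy
    have hzmem : y ∈ (IntermediateField.adjoin F (t '' Set.Icc 1 n))⟮t (n+1)⟯ := hy
    have hzeq : algebraMap (IntermediateField.adjoin F (t '' Set.Icc 1 n))
        (IntermediateField.adjoin F (t '' Set.Icc 1 n))⟮t (n+1)⟯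
        (algebraMap F (IntermediateField.adjoin F (t '' Set.Icc 1 n)) bz)
        = (⟨y, hzmem⟩ : (IntermediateField.adjoin F (t '' Set.Icc 1 n))⟮t (n+1)⟯) ^ p
          - (⟨y, hzmem⟩ : (IntermediateField.adjoin F (t '' Set.Icc 1 n))⟮t (n+1)⟯) := by
      apply (algebraMap ((IntermediateField.adjoin F (t '' Set.Icc 1 n))⟮t (n+1)⟯) L).injective
      rw [RingHom.map_sub, RingHom.map_pow,
        ← IsScalarTower.algebraMap_apply (IntermediateField.adjoin F (t '' Set.Icc 1 n))
          ((IntermediateField.adjoin F (t '' Set.Icc 1 n))⟮t (n+1)⟯) L,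
        ← IsScalarTower.algebraMap_apply F (IntermediateField.adjoin F (t '' Set.Icc 1 n)) L]
      exact hbz
    obtain ⟨c1, v, hc1⟩ := AS.descend p hxM hirr hzeq
    have hφM : (ZMod.castHom dvd_rfl (IntermediateField.adjoin F (t '' Set.Icc 1 n)) :
          ZMod p →+* (IntermediateField.adjoin F (t '' Set.Icc 1 n)))
        = (algebraMap F (IntermediateField.adjoin F (t '' Set.Icc 1 n))).comp
            (ZMod.castHom dvd_rfl F) := RingHom.ext_zmod _ _
    have hvL : algebraMap F L (bz - ZMod.castHom dvd_rfl F c1 * a (n+1))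
        = (v:L)^p - (v:L) := by
      have h3 : algebraMap F (IntermediateField.adjoin F (t '' Set.Icc 1 n))
          (bz - ZMod.castHom dvd_rfl F c1 * a (n+1)) = v ^ p - v := by
        rw [map_sub, map_mul]
        rw [hc1, hφM]
        simp only [RingHom.comp_apply]
        ring
      rw [IsScalarTower.algebraMap_apply F (IntermediateField.adjoin F (t '' Set.Icc 1 n)) L,
        h3, RingHom.map_sub, RingHom.map_pow]
      rfl
    obtain ⟨c2, u, hc2⟩ := hInv v _ hvL
    refine ⟨fun j => if j = n+1 then c1 else c2 j, u, ?_⟩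
    rw [hsum]
    have h4 : ∀ j ∈ Finset.Icc 1 n,
        ZMod.castHom dvd_rfl F (if j = n+1 then c1 else c2 j) * a j
        = ZMod.castHom dvd_rfl F (c2 j) * a j := by
      intro j hj
      have hjne : j ≠ n+1 := by simp only [Finset.mem_Icc] at hj; omega
      rw [if_neg hjne]
    rw [Finset.sum_congr rfl h4]
    have h5 : (if n+1 = n+1 then c1 else c2 (n+1)) = c1 := if_pos rfl
    beta_reduce
    rw [h5]
    linear_combination hc2

/-- The splitting field of `∏_{i=1}^{n} (X^p - X - s^(p*i+1))` over `𝔽_p(s)`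
has degree `p^n`. -/
theorem artinSchreier_compositum_degree
    (p n : ℕ) [Fact p.Prime] (hn : 0 < n) :
    Module.finrank (RatFunc (ZMod p))
      (∏ i ∈ Finset.Icc 1 n,
        (X ^ p - X - C (RatFunc.X ^ (p * i + 1)) :
          Polynomial (RatFunc (ZMod p)))).SplittingField = p ^ n := by
  classical
  have hp2 : 2 ≤ p := (Fact.out : p.Prime).two_le
  haveI : CharP (RatFunc (ZMod p)) p :=
    charP_of_injective_ringHom (RatFunc.C : ZMod p →+* RatFunc (ZMod p)).injective p
  set F := RatFunc (ZMod p) with hFdef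
  set a : ℕ → F := fun i => RatFunc.X ^ (p * i + 1) with hadef
  set f : F[X] := ∏ i ∈ Finset.Icc 1 n, (X ^ p - X - C (a i)) with hfdef
  set L := f.SplittingField with hLdef
  haveI : CharP L p := charP_of_injective_algebraMap (algebraMap F L).injective p
  have hfm : f.Monic := monic_prod_of_monic _ _ (fun i _ => AS.monic p (a i))
  have hf0 : f ≠ 0 := hfm.ne_zero
  have hsplits : (f.map (algebraMap F L)).Splits := SplittingField.splits f
  have hroots : ∀ i ∈ Finset.Icc 1 n, ∃ x : L, x ^ p - x = algebraMap F L (a i) := by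
    intro i hi
    have hdvd : (X ^ p - X - C (a i)) ∣ f := Finset.dvd_prod_of_mem _ hi
    have hgsp : ((X ^ p - X - C (a i)).map (algebraMap F L)).Splits :=
      hsplits.of_dvd ((Polynomial.map_ne_zero_iff (algebraMap F L).injective).mpr hf0)
        (Polynomial.map_dvd _ hdvd)
    have hdeg : (X ^ p - X - C (a i)).degree ≠ 0 := by
      rw [degree_eq_natDegree (AS.monic p (a i)).ne_zero, AS.natDegree_aux p (a i)]
      exact_mod_cast by omega
    obtain ⟨x, hx⟩ := hgsp.exists_eval_eq_zero (by rwa [degree_map])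
    rw [eval_map] at hx
    refine ⟨x, ?_⟩
    have h2 : eval₂ (algebraMap F L) x (X ^ p - X - C (a i))
        = x ^ p - x - algebraMap F L (a i) := by simp
    rw [h2] at hx
    linear_combination hx
  set t : ℕ → L := fun i => if h : i ∈ Finset.Icc 1 n then (hroots i h).choose else 0
    with htdef
  have ht : ∀ i ∈ Finset.Icc 1 n, (t i) ^ p - t i = algebraMap F L (a i) := by
    intro i hi
    have h5 : t i = (hroots i hi).choose := dif_pos hi
    rw [h5]
    exact (hroots i hi).choose_spec
  have hind : ∀ (c : ℕ → ZMod p) (u : F),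
      (∑ i ∈ Finset.Icc 1 n, ZMod.castHom dvd_rfl F (c i) * a i) = u ^ p - u →
      ∀ i ∈ Finset.Icc 1 n, c i = 0 := by
    intro c u hc
    apply AS.ratfunc_indep p n c u
    rw [← hc]
    refine Finset.sum_congr rfl (fun i _ => ?_)
    have hcast : (ZMod.castHom dvd_rfl F : ZMod p →+* F) = RatFunc.C :=
      RingHom.ext_zmod _ _
    rw [hcast, hadef]
  obtain ⟨hrank, -⟩ := AS.main p a t n ht hind
  have htop : IntermediateField.adjoin F (t '' Set.Icc 1 n) = ⊤ := by
    refine le_antisymm le_top ?_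
    have h1 : Algebra.adjoin F (f.rootSet L) = ⊤ := IsSplittingField.adjoin_rootSet L f
    have h2 : f.rootSet L ⊆ (IntermediateField.adjoin F (t '' Set.Icc 1 n) : Set L) := by
      intro r hr
      obtain ⟨-, hev⟩ := mem_rootSet.mp hr
      have h3 : ∃ i ∈ Finset.Icc 1 n, aeval r (X ^ p - X - C (a i)) = 0 := by
        have hev' : (∏ i ∈ Finset.Icc 1 n, aeval r (X ^ p - X - C (a i))) = 0 := by
          rw [← map_prod]
          exact hev
        exact Finset.prod_eq_zero_iff.mp hev'
      obtain ⟨i, hi, hgi⟩ := h3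
      have hre : r ^ p - r = algebraMap F L (a i) := by
        simp only [map_sub, map_pow, aeval_X, aeval_C] at hgi
        linear_combination hgi
      have hfix : (r - t i) ^ p = r - t i := by
        rw [sub_pow_char]
        linear_combination hre - ht i hi
      obtain ⟨c, hc⟩ := AS.exists_zmod p hfix
      have hcast : (ZMod.castHom dvd_rfl L : ZMod p →+* L)
          = (algebraMap F L).comp (ZMod.castHom dvd_rfl F) := RingHom.ext_zmod _ _
      have hr2 : r = t i + algebraMap F L (ZMod.castHom dvd_rfl F c) := by
        rw [hcast] at hc
        simp only [RingHom.comp_apply] at hc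
        linear_combination -hc
      rw [hr2]
      refine add_mem ?_ (IntermediateField.algebraMap_mem _ _)
      apply IntermediateField.subset_adjoin
      refine ⟨i, ?_, rfl⟩
      simp only [Set.mem_Icc]
      simp only [Finset.mem_Icc] at hi
      exact hi
    have h4 : (⊤ : Subalgebra F L)
        ≤ (IntermediateField.adjoin F (t '' Set.Icc 1 n)).toSubalgebra := by
      rw [← h1]
      exact Algebra.adjoin_le h2
    intro y _
    exact h4 (Algebra.mem_top)
  rw [htop, IntermediateField.finrank_top'] at hrank
  exact hrank
end

section
/- Let p be a prime number and let m be a positive integer not divisible by p. Then the polynomial X^p − X − t^(−m), regarded as a polynomial in X with coefficients in the field F_p((t)) of formal Laurent series over F_p = ZMod p (where t^(−m) denotes the inverse of the m-th power of the uniformizer t), is irreducible over F_p((t)). -/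
open Polynomial

/-- Artin–Schreier irreducibility criterion: over a field of characteristic `p`,
the polynomial `X^p - X - a` is irreducible if `a` is not of the form `b^p - b`. -/
theorem artinSchreier_aux {K : Type*} [Field K] (p : ℕ) [Fact p.Prime] [CharP K p]
    (a : K) (ha : ∀ b : K, b ^ p - b ≠ a) :
    Irreducible (X ^ p - X - C a : K[X]) := by
  have hp : p.Prime := Fact.out
  set f : K[X] := X ^ p - X - C a with hf
  have hf' : f = X ^ p - (X + C a) := by ring
  have hdegXC : (X + C a : K[X]).degree < (p : WithBot ℕ) := by
    rw [degree_X_add_C]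
    exact_mod_cast hp.one_lt
  have hfm : f.Monic := by rw [hf']; exact monic_X_pow_sub hdegXC
  have hdeg : f.degree = p := by
    rw [hf', degree_sub_eq_left_of_degree_lt (by rwa [degree_X_pow]), degree_X_pow]
  have hnatdeg : f.natDegree = p := natDegree_eq_of_degree_eq_some hdeg
  have hf0 : f ≠ 0 := hfm.ne_zero
  have hfnu : ¬IsUnit f :=
    not_isUnit_of_natDegree_pos f (by rw [hnatdeg]; exact hp.pos)
  -- a splitting field
  obtain ⟨g₀, hg₀m, hg₀irr, hg₀dvd⟩ := f.exists_monic_irreducible_factor hfnu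
  haveI : Fact (Irreducible g₀) := ⟨hg₀irr⟩
  set L := AdjoinRoot g₀ with hL
  set α : L := AdjoinRoot.root g₀ with hα
  haveI : CharP L p := charP_of_injective_algebraMap (algebraMap K L).injective p
  have hαroot : α ^ p - α - algebraMap K L a = 0 := by
    obtain ⟨c, hc⟩ := hg₀dvd
    have h1 : aeval α f = 0 := by
      rw [hc, map_mul, AdjoinRoot.aeval_eq, AdjoinRoot.mk_self, zero_mul]
    simpa [hf] using h1
  set e : ZMod p →+* L := ZMod.castHom dvd_rfl L with he
  have he_inj : Function.Injective e := e.injective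
  set r : ZMod p → L := fun i => α + e i with hr
  have hr_inj : Function.Injective r := fun i j hij => he_inj (by
    simpa [hr] using hij)
  set fL : L[X] := f.map (algebraMap K L) with hfL
  have hfL0 : fL ≠ 0 := (Polynomial.map_ne_zero_iff (algebraMap K L).injective).mpr hf0
  have hfLnat : fL.natDegree = p := by
    rw [hfL, natDegree_map, hnatdeg]
  have hroot : ∀ i : ZMod p, fL.IsRoot (r i) := by
    intro i
    have hei : e i ^ p = e i := by
      rw [← map_pow, ZMod.pow_card]
    have hfLeq : fL = X ^ p - X - C (algebraMap K L a) := by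
      simp [hfL, hf, Polynomial.map_sub, Polynomial.map_pow]
    rw [IsRoot.def, hfLeq]
    simp only [eval_sub, eval_pow, eval_X, eval_C, hr]
    rw [add_pow_char, hei, ← hαroot]
    ring
  set M : Multiset L := Multiset.map r Finset.univ.val with hM
  have hMnodup : M.Nodup := Finset.univ.nodup.map hr_inj
  have hMle : M ≤ fL.roots := by
    rw [Multiset.le_iff_subset hMnodup]
    intro x hx
    obtain ⟨i, -, rfl⟩ := Multiset.mem_map.mp hx
    exact (mem_roots hfL0).mpr (hroot i)
  have hMcard : Multiset.card M = p := by
    rw [hM, Multiset.card_map, ← Finset.card_def, Finset.card_univ, ZMod.card]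
  have hMroots : fL.roots = M := by
    refine (Multiset.eq_of_le_of_card_le hMle ?_).symm
    rw [hMcard]
    calc Multiset.card fL.roots ≤ fL.natDegree := fL.card_roots'
      _ = p := hfLnat
  have hsplitsL : fL.Splits := by
    rw [splits_iff_card_roots, hMroots, hMcard, hfLnat]
  -- key claim: no monic divisor of degree strictly between 0 and p
  have key : ∀ q : K[X], q.Monic → q ∣ f → 0 < q.natDegree → q.natDegree < p → False := by
    intro q hqm hqdvd hd0 hdp
    set d := q.natDegree with hd
    set qL : L[X] := q.map (algebraMap K L) with hqL
    have hqLm : qL.Monic := hqm.map _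
    have hqLdvd : qL ∣ fL := Polynomial.map_dvd _ hqdvd
    have hqLsplits : qL.Splits :=
      hsplitsL.of_dvd hfL0 hqLdvd
    have hqLroots_le : qL.roots ≤ M := hMroots ▸ roots.le_of_dvd hfL0 hqLdvd
    have hqLcard : Multiset.card qL.roots = d := by
      have h := splits_iff_card_roots.mp hqLsplits
      rwa [hqL, natDegree_map] at h
    -- pull back roots to ZMod p
    set T : Multiset (ZMod p) := qL.roots.map (Function.invFun r) with hT
    have hTmap : T.map r = qL.roots := by
      rw [hT, Multiset.map_map]
      refine (Multiset.map_congr rfl ?_).trans (Multiset.map_id _)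
      intro x hx
      have hxM : x ∈ M := Multiset.mem_of_le hqLroots_le hx
      obtain ⟨i, -, hi⟩ := Multiset.mem_map.mp hxM
      exact Function.invFun_eq ⟨i, hi⟩
    have hTcard : Multiset.card T = d := by rw [hT, Multiset.card_map, hqLcard]
    -- sum of roots
    have hsum : qL.roots.sum = d • α + e T.sum := by
      have h2 : (T.map fun i => e i).sum = e T.sum := (map_multiset_sum e T).symm
      rw [← hTmap, hr, Multiset.sum_map_add, Multiset.map_const', Multiset.sum_replicate,
        hTcard, h2]
    have hnext : (algebraMap K L) q.nextCoeff = -qL.roots.sum := by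
      rw [← hqLsplits.nextCoeff_eq_neg_sum_roots_of_monic hqLm, hqL,
        nextCoeff_map (algebraMap K L).injective]
    -- cast compatibility
    have hecast : ∀ z : ZMod p, e z = algebraMap K L (ZMod.castHom dvd_rfl K z) := by
      intro z
      have h3 : e = (algebraMap K L).comp (ZMod.castHom dvd_rfl K) := RingHom.ext_zmod _ _
      rw [h3]; rfl
    set c : K := ZMod.castHom dvd_rfl K T.sum with hc
    have hda : (d : L) * α = algebraMap K L (-(q.nextCoeff + c)) := by
      have h1 : d • α = (d : L) * α := nsmul_eq_mul d α
      have h4 : algebraMap K L q.nextCoeff = -((d : L) * α + algebraMap K L c) := by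
        rw [hnext, hsum, h1, hecast]
      rw [map_neg, map_add]
      linear_combination h4
    have hdK : (d : K) ≠ 0 := by
      rw [Ne, CharP.cast_eq_zero_iff K p d]
      exact fun hdvd => absurd (Nat.le_of_dvd hd0 hdvd) (not_le.mpr hdp)
    have hα_mem : α = algebraMap K L ((d : K)⁻¹ * -(q.nextCoeff + c)) := by
      have hdL : (d : L) = algebraMap K L (d : K) := by push_cast; ring
      rw [map_mul, ← hda, hdL, ← mul_assoc, ← map_mul,
        inv_mul_cancel₀ hdK, map_one, one_mul]
    set b : K := (d : K)⁻¹ * -(q.nextCoeff + c) with hb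
    apply ha b
    have h5 : algebraMap K L (b ^ p - b - a) = 0 := by
      rw [map_sub, map_sub, map_pow, ← hα_mem, hαroot]
    have h0 : b ^ p - b - a = 0 := (algebraMap K L).injective (by rwa [map_zero])
    exact sub_eq_zero.mp h0
  -- conclude irreducibility
  have hdeg_pos : ∀ w : K[X], w ≠ 0 → ¬IsUnit w → 0 < w.natDegree := by
    intro w hw0 hwu
    rcases Nat.eq_zero_or_pos w.natDegree with h | h
    · have hw : w = C (w.coeff 0) := eq_C_of_natDegree_eq_zero h
      have hc0 : w.coeff 0 ≠ 0 := fun hc => hw0 (by rw [hw, hc, map_zero])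
      exact absurd (hw ▸ isUnit_C.mpr (isUnit_iff_ne_zero.mpr hc0)) hwu
    · exact h
  constructor
  · exact hfnu
  · intro u v huv
    by_contra hcon
    push_neg at hcon
    obtain ⟨hu, hv⟩ := hcon
    have hu0 : u ≠ 0 := fun h => hf0 (by rw [huv, h, zero_mul])
    have hv0 : v ≠ 0 := fun h => hf0 (by rw [huv, h, mul_zero])
    have hu' : 0 < u.natDegree := hdeg_pos u hu0 hu
    have hv' : 0 < v.natDegree := hdeg_pos v hv0 hv
    have hsum' : u.natDegree + v.natDegree = p := by
      rw [← natDegree_mul hu0 hv0, ← huv, hnatdeg]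
    have hl : u.leadingCoeff ≠ 0 := leadingCoeff_ne_zero.mpr hu0
    have humonic : (u * C u.leadingCoeff⁻¹).Monic := monic_mul_leadingCoeff_inv hu0
    have hudvd : u * C u.leadingCoeff⁻¹ ∣ f := by
      refine ⟨C u.leadingCoeff * v, ?_⟩
      rw [huv, mul_assoc, ← mul_assoc (C u.leadingCoeff⁻¹), ← C_mul,
        inv_mul_cancel₀ hl, C_1, one_mul]
    have hnd : (u * C u.leadingCoeff⁻¹).natDegree = u.natDegree :=
      natDegree_mul_C (inv_ne_zero hl)
    exact key _ humonic hudvd (by rw [hnd]; exact hu') (by rw [hnd]; omega)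

/-- The Artin–Schreier polynomial `X^p - X - t^(-m)` is irreducible over the
field `𝔽_p((t))` of formal Laurent series, when `p ∤ m`. -/
theorem artinSchreier_irreducible_over_laurentSeries
    (p : ℕ) [Fact p.Prime] (m : ℕ) (hm : 0 < m) (hpm : ¬ p ∣ m) :
    Irreducible
      (X ^ p - X -
        C (((HahnSeries.single (1 : ℤ) (1 : ZMod p) : LaurentSeries (ZMod p)) ^ m)⁻¹) :
        Polynomial (LaurentSeries (ZMod p))) := by
  have hp : p.Prime := Fact.out
  haveI : CharP (LaurentSeries (ZMod p)) p :=
    charP_of_injective_ringHom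
      (f := (HahnSeries.C : ZMod p →+* LaurentSeries (ZMod p))) HahnSeries.C_injective p
  -- rewrite the constant as `single (-m) 1`
  have hsingle : ((HahnSeries.single (1 : ℤ) (1 : ZMod p) : LaurentSeries (ZMod p)) ^ m)⁻¹
      = HahnSeries.single (-(m : ℤ)) (1 : ZMod p) := by
    have h1 : (HahnSeries.single (1 : ℤ) (1 : ZMod p) : LaurentSeries (ZMod p)) ^ m
        = HahnSeries.single (m : ℤ) (1 : ZMod p) := by
      rw [HahnSeries.single_pow, one_pow, nsmul_eq_mul, mul_one]
    rw [h1]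
    refine inv_eq_of_mul_eq_one_right ?_
    rw [HahnSeries.single_mul_single, one_mul, add_neg_cancel, HahnSeries.single_zero_one]
  rw [hsingle]
  apply artinSchreier_aux p
  -- `single (-m) 1` is not of the form `b^p - b`
  intro b hb
  have hs0 : (HahnSeries.single (-(m : ℤ)) (1 : ZMod p) : LaurentSeries (ZMod p)) ≠ 0 :=
    HahnSeries.single_ne_zero one_ne_zero
  have hb0 : b ≠ 0 := by
    rintro rfl
    rw [zero_pow hp.ne_zero, sub_zero] at hb
    exact hs0 hb.symm
  set n : ℤ := b.order with hn
  rcases lt_or_ge n 0 with hneg | hpos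
  · -- negative order: compare coefficients at `p * n`
    have hbp0 : b ^ p ≠ 0 := pow_ne_zero _ hb0
    have hord : (b ^ p).order = (p : ℤ) * n := by
      rw [HahnSeries.order_pow, ← hn, nsmul_eq_mul]
    have hcoeff : (b ^ p).coeff ((p : ℤ) * n) ≠ 0 := by
      have h : (b ^ p).coeff (b ^ p).order ≠ 0 := HahnSeries.coeff_order_eq_zero.not.mpr hbp0
      rwa [hord] at h
    have hlt : (p : ℤ) * n < n := by
      have h2 : (2 : ℤ) ≤ (p : ℤ) := by exact_mod_cast hp.two_le
      nlinarith
    have hblow : b.coeff ((p : ℤ) * n) = 0 :=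
      HahnSeries.coeff_eq_zero_of_lt_order (by rw [← hn]; exact hlt)
    have hc := congrArg (fun x : LaurentSeries (ZMod p) => x.coeff ((p : ℤ) * n)) hb
    simp only [HahnSeries.coeff_sub, hblow, sub_zero, HahnSeries.coeff_single] at hc
    split_ifs at hc with heq
    · -- p * n = -m, so p ∣ m
      exact hpm (Int.natCast_dvd_natCast.mp ⟨-n, by linarith⟩)
    · exact hcoeff hc
  · -- nonnegative order: coefficient at `-m` vanishes
    have h1 : b.coeff (-(m : ℤ)) = 0 := by
      refine HahnSeries.coeff_eq_zero_of_lt_order ?_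
      rw [← hn]
      have : (0 : ℤ) < (m : ℤ) := by exact_mod_cast hm
      omega
    have h2 : (b ^ p).coeff (-(m : ℤ)) = 0 := by
      refine HahnSeries.coeff_eq_zero_of_lt_order ?_
      rw [HahnSeries.order_pow, ← hn, nsmul_eq_mul]
      have hm' : (0 : ℤ) < (m : ℤ) := by exact_mod_cast hm
      have hp' : (0 : ℤ) ≤ (p : ℤ) := by positivity
      nlinarith
    have hc := congrArg (fun x : LaurentSeries (ZMod p) => x.coeff (-(m : ℤ))) hb
    simp only [HahnSeries.coeff_sub, h1, h2, sub_zero, HahnSeries.coeff_single_same] at hc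
    exact one_ne_zero hc.symm
end
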